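/- Let $c_1, c_2 > 0$. Then the system of equations $\frac{x_1 x_2}{(x_1+x_2)^2} - 2c_1 x_1^2 = 0$ and $x_1 - 2c_2 x_2 (x_1+x_2)^2 = 0$ has exactly one solution with $x_1 > 0$ and $x_2 > 0$, namely $x_1 = \frac{\sqrt{c_2}}{\sqrt{c_1}+\sqrt{c_2}} \cdot \frac{1}{\sqrt{2\sqrt{c_1 c_2}}}$ and $x_2 = \frac{\sqrt{c_1}}{\sqrt{c_1}+\sqrt{c_2}} \cdot \frac{1}{\sqrt{2\sqrt{c_1 c_2}}}$. -/

import Mathlib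

noncomputable def eqX1 (c1 c2 : ℝ) : ℝ :=
  Real.sqrt c2 / (Real.sqrt c1 + Real.sqrt c2) * (1 / Real.sqrt (2 * Real.sqrt (c1 * c2)))

noncomputable def eqX2 (c1 c2 : ℝ) : ℝ :=
  Real.sqrt c1 / (Real.sqrt c1 + Real.sqrt c2) * (1 / Real.sqrt (2 * Real.sqrt (c1 * c2)))

/-!
Dividing out the positive factors, the first-order conditions read `x₂ = 2c₁x₁s²` and
`x₁ = 2c₂x₂s²` with `s = x₁ + x₂`. Their product gives `4c₁c₂s⁴ = 1`, which fixes the total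
output `s`, and their quotient gives `c₁x₁² = c₂x₂²`, i.e. `√c₁ x₁ = √c₂ x₂`, which fixes the
market shares.
-/

open Real

noncomputable def totalOutput (c1 c2 : ℝ) : ℝ := 1 / √(2 * √(c1 * c2))

lemma eqX1_eq (c1 c2 : ℝ) : eqX1 c1 c2 = √c2 / (√c1 + √c2) * totalOutput c1 c2 := rfl

lemma eqX2_eq (c1 c2 : ℝ) : eqX2 c1 c2 = √c1 / (√c1 + √c2) * totalOutput c1 c2 := rfl

lemma totalOutput_sq {c1 : ℝ} (hc1 : 0 ≤ c1) (c2 : ℝ) :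
    totalOutput c1 c2 ^ 2 = 1 / (2 * √c1 * √c2) := by
  rw [totalOutput, div_pow, sq_sqrt (by positivity), sqrt_mul hc1, one_pow, mul_assoc]

section

variable {c1 c2 : ℝ} (hc1 : 0 < c1) (hc2 : 0 < c2)
include hc1 hc2

lemma totalOutput_pos : 0 < totalOutput c1 c2 := by
  unfold totalOutput
  positivity

lemma eq_totalOutput_of_mul_pow_four {s : ℝ} (hs : 0 ≤ s) (h : 4 * c1 * c2 * s ^ 4 = 1) :
    s = totalOutput c1 c2 := by
  have hT : totalOutput c1 c2 ^ 4 = 1 / (4 * c1 * c2) := by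
    rw [show 4 = 2 * 2 by rfl, pow_mul, totalOutput_sq hc1.le c2, div_pow,
      mul_pow, mul_pow, sq_sqrt hc1.le, sq_sqrt hc2.le]
    ring
  rw [← pow_left_inj₀ hs (totalOutput_pos hc1 hc2).le four_ne_zero, hT, eq_div_iff (by positivity)]
  linear_combination h

end

lemma sqrt_mul_eq_sqrt_mul_of_mul_sq_eq {c1 c2 x1 x2 : ℝ} (hc1 : 0 ≤ c1) (hc2 : 0 ≤ c2)
    (hx1 : 0 ≤ x1) (hx2 : 0 ≤ x2) (h : c1 * x1 ^ 2 = c2 * x2 ^ 2) : √c1 * x1 = √c2 * x2 := by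
  rw [← pow_left_inj₀ (by positivity) (by positivity) two_ne_zero, mul_pow, mul_pow,
    sq_sqrt hc1, sq_sqrt hc2, h]

lemma add_eq_and_mul_eq_mul_iff {a b x y s : ℝ} (hab : a + b ≠ 0) :
    (x + y = s ∧ a * x = b * y) ↔ (x = b / (a + b) * s ∧ y = a / (a + b) * s) := by
  constructor
  · rintro ⟨rfl, h⟩
    constructor
    · field_simp
      linear_combination h
    · field_simp
      linear_combination -h
  · rintro ⟨rfl, rfl⟩
    constructor
    · field_simp
      ring
    · ring

section

variable {c1 c2 x1 x2 : ℝ} (hx1 : 0 < x1) (hx2 : 0 < x2)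
include hx1 hx2

lemma firm1_foc_iff :
    x1 * x2 / (x1 + x2) ^ 2 - 2 * c1 * x1 ^ 2 = 0 ↔ x2 = 2 * c1 * x1 * (x1 + x2) ^ 2 := by
  rw [sub_eq_zero, div_eq_iff (by positivity)]
  constructor
  · intro h
    apply mul_left_cancel₀ hx1.ne'
    linear_combination h
  · intro h
    linear_combination x1 * h

lemma reduced_foc_iff (hc1 : 0 < c1) (hc2 : 0 < c2) :
    (x2 = 2 * c1 * x1 * (x1 + x2) ^ 2 ∧ x1 = 2 * c2 * x2 * (x1 + x2) ^ 2) ↔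
      (x1 + x2 = totalOutput c1 c2 ∧ √c1 * x1 = √c2 * x2) := by
  constructor
  · rintro ⟨h1, h2⟩
    have hprod : 4 * c1 * c2 * (x1 + x2) ^ 4 = 1 := by
      apply mul_left_cancel₀ (mul_pos hx1 hx2).ne'
      linear_combination (-x2) * h2 - 2 * c2 * x2 * (x1 + x2) ^ 2 * h1
    have hquot : c1 * x1 ^ 2 = c2 * x2 ^ 2 := by
      apply mul_left_cancel₀ (show 2 * (x1 + x2) ^ 2 ≠ 0 by positivity)
      linear_combination x2 * h2 - x1 * h1
    exact ⟨eq_totalOutput_of_mul_pow_four hc1 hc2 (by positivity) hprod,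
      sqrt_mul_eq_sqrt_mul_of_mul_sq_eq hc1.le hc2.le hx1.le hx2.le hquot⟩
  · rintro ⟨hs, hr⟩
    have ha2 : √c1 ^ 2 = c1 := sq_sqrt hc1.le
    have hb2 : √c2 ^ 2 = c2 := sq_sqrt hc2.le
    rw [hs, totalOutput_sq hc1.le c2]
    constructor
    · field_simp
      linear_combination (-√c1) * hr + x1 * ha2
    · field_simp
      linear_combination √c2 * hr + x2 * hb2

end

theorem stmt0 (c1 c2 : ℝ) (hc1 : 0 < c1) (hc2 : 0 < c2) :
    ∀ x1 x2 : ℝ, 0 < x1 → 0 < x2 →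
      ((x1 * x2 / (x1 + x2) ^ 2 - 2 * c1 * x1 ^ 2 = 0 ∧
        x1 - 2 * c2 * x2 * (x1 + x2) ^ 2 = 0) ↔
       (x1 = eqX1 c1 c2 ∧ x2 = eqX2 c1 c2)) := by
  intro x1 x2 hx1 hx2
  rw [firm1_foc_iff hx1 hx2, sub_eq_zero, reduced_foc_iff hx1 hx2 hc1 hc2, eqX1_eq, eqX2_eq,
    add_eq_and_mul_eq_mul_iff (by positivity)]
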